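/- arXiv:2510.04389 — 2 statements merged into one kernel-verified Lean document; each statement's English description precedes it below -/
import Mathlib

section
/- Let A = [[1,-1],[0,1]] and B = [[1,0],[1,1]] in SL(2,ℤ). The orbit of the triple (A, B, A) under the Hurwitz action of the braid group B₃ on SL(2,ℤ)³ has exactly 8 elements. -/
abbrev SL2Z := Matrix.SpecialLinearGroup (Fin 2) ℤ

def A : SL2Z := ⟨!![1, -1; 0, 1], by norm_num [Matrix.det_fin_two_of]⟩
def B : SL2Z := ⟨!![1, 0; 1, 1], by norm_num [Matrix.det_fin_two_of]⟩

/-- The Hurwitz move σ₁ on triples. -/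
def hurwitzOne {G : Type*} [Group G] (p : G × G × G) : G × G × G :=
  (p.1 * p.2.1 * p.1⁻¹, p.1, p.2.2)

/-- The Hurwitz move σ₂ on triples. -/
def hurwitzTwo {G : Type*} [Group G] (p : G × G × G) : G × G × G :=
  (p.1, p.2.1 * p.2.2 * p.2.1⁻¹, p.2.1)

/-- One step of the B₃ Hurwitz action (a generator or its inverse). -/
def hurTripleStep {G : Type*} [Group G] (p q : G × G × G) : Prop :=
  q = hurwitzOne p ∨ q = hurwitzTwo p ∨ p = hurwitzOne q ∨ p = hurwitzTwo q

instance : DecidableEq SL2Z := fun a b => decidable_of_iff (a.1 = b.1) Subtype.ext_iff.symm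

def C : SL2Z := ⟨!![2, -1; 1, 0], by norm_num [Matrix.det_fin_two_of]⟩
def D : SL2Z := ⟨!![0, -1; 1, 2], by norm_num [Matrix.det_fin_two_of]⟩

def S : Finset (SL2Z × SL2Z × SL2Z) :=
  {(A,B,A), (B,A,B), (A,C,B), (C,B,B), (B,B,D), (A,A,C), (B,D,A), (D,A,A)}

/-- Inverse of σ₁. -/
def hOneInv {G : Type*} [Group G] (p : G × G × G) : G × G × G :=
  (p.2.1, p.2.1⁻¹ * p.1 * p.2.1, p.2.2)

/-- Inverse of σ₂. -/
def hTwoInv {G : Type*} [Group G] (p : G × G × G) : G × G × G :=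
  (p.1, p.2.2, p.2.2⁻¹ * p.2.1 * p.2.2)

lemma hOneInv_one {G : Type*} [Group G] (p : G × G × G) : hOneInv (hurwitzOne p) = p := by
  obtain ⟨a, b, c⟩ := p
  simp [hOneInv, hurwitzOne, mul_assoc]

lemma hTwoInv_two {G : Type*} [Group G] (p : G × G × G) : hTwoInv (hurwitzTwo p) = p := by
  obtain ⟨a, b, c⟩ := p
  simp [hTwoInv, hurwitzTwo, mul_assoc]

lemma S_closed : ∀ p ∈ S, hurwitzOne p ∈ S ∧ hurwitzTwo p ∈ S ∧ hOneInv p ∈ S ∧ hTwoInv p ∈ S := by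
  decide

instance (p q : SL2Z × SL2Z × SL2Z) : Decidable (hurTripleStep p q) := by
  unfold hurTripleStep; infer_instance

/-- The Hurwitz orbit of (A, B, A) under B₃ has exactly 8 elements. -/
theorem hurwitz_orbit_triple_card_eight :
    {q : SL2Z × SL2Z × SL2Z |
      Relation.ReflTransGen hurTripleStep (A, B, A) q}.ncard = 8 := by
  have hset : {q : SL2Z × SL2Z × SL2Z |
      Relation.ReflTransGen hurTripleStep (A, B, A) q} = ↑S := by
    apply Set.eq_of_subset_of_subset
    · intro q hq
      simp only [Set.mem_setOf_eq] at hq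
      induction hq with
      | refl => decide
      | tail _ hstep ih =>
        rename_i p q _
        obtain ⟨h1, h2, h3, h4⟩ := S_closed p ih
        rcases hstep with h | h | h | h
        · rw [h]; exact h1
        · rw [h]; exact h2
        · have : q = hOneInv p := by rw [h, hOneInv_one]
          rw [this]; exact h3
        · have : q = hTwoInv p := by rw [h, hTwoInv_two]
          rw [this]; exact h4
    · intro q hq
      have step : ∀ x y : SL2Z × SL2Z × SL2Z, hurTripleStep x y →
          Relation.ReflTransGen hurTripleStep (A, B, A) x →
          Relation.ReflTransGen hurTripleStep (A, B, A) y :=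
        fun x y h hx => hx.tail h
      have h0 : Relation.ReflTransGen hurTripleStep (A, B, A) (A, B, A) :=
        Relation.ReflTransGen.refl
      rw [Finset.mem_coe] at hq
      simp only [Set.mem_setOf_eq]
      have hACB : Relation.ReflTransGen hurTripleStep (A, B, A) (A, C, B) :=
        h0.tail (by decide)
      have hBDA : Relation.ReflTransGen hurTripleStep (A, B, A) (B, D, A) :=
        h0.tail (by decide)
      fin_cases hq
      · exact h0
      · exact hACB.tail (by decide)
      · exact hACB
      · exact hACB.tail (by decide)
      · exact hBDA.tail (by decide)
      · exact h0.tail (by decide)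
      · exact hBDA
      · exact h0.tail (by decide)
  rw [hset, Set.ncard_coe_finset]
  decide
end

section
/- Let G be a group and let x, y ∈ G generate a free group of rank 2. Define σ(g₁,g₂) = (g₁g₂g₁⁻¹, g₁). If for integers k, j there exists f ∈ G with f·σ^k(x,y)·f⁻¹ = σ^j(x,y) (conjugating both coordinates simultaneously) and f centralizes ⟨x,y⟩, then k = j. -/
def hur {G : Type*} [Group G] : Equiv.Perm (G × G) where
  toFun p := (p.1 * p.2 * p.1⁻¹, p.1)
  invFun p := (p.2, p.2⁻¹ * p.1 * p.2)
  left_inv p := by obtain ⟨a, b⟩ := p; ext <;> simp <;> group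
  right_inv p := by obtain ⟨a, b⟩ := p; ext <;> simp <;> group

lemma hur_apply {G : Type*} [Group G] (a b : G) : hur (a, b) = (a * b * a⁻¹, a) := rfl

lemma hur_zpow_apply_add {G : Type*} [Group G] (m n : ℤ) (p : G × G) :
    (hur ^ (m + n)) p = (hur ^ m) ((hur ^ n) p) := by
  rw [zpow_add]; rfl

lemma hur_sq {G : Type*} [Group G] (a b : G) :
    (hur ^ ((1 : ℤ) + 1)) (a, b) = ((a*b)*a*(a*b)⁻¹, (a*b)*b*(a*b)⁻¹) := by
  rw [hur_zpow_apply_add, zpow_one, hur_apply, hur_apply]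
  ext <;> (simp <;> group)

lemma hur_neg_one {G : Type*} [Group G] (a b : G) :
    (hur ^ (-1 : ℤ)) (a, b) = (b, b⁻¹ * a * b) := by
  rw [zpow_neg_one]; rfl

lemma hur_inv_sq {G : Type*} [Group G] (a b : G) :
    (hur ^ ((-1 : ℤ) + -1)) (a, b) = ((a*b)⁻¹*a*(a*b), (a*b)⁻¹*b*(a*b)) := by
  rw [hur_zpow_apply_add, hur_neg_one, hur_neg_one]
  ext <;> (simp; group)

lemma hur_two_mul {G : Type*} [Group G] (x y : G) (m : ℤ) :
    (hur ^ (2 * m)) (x, y) =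
      ((x*y)^m * x * ((x*y)^m)⁻¹, (x*y)^m * y * ((x*y)^m)⁻¹) := by
  induction m using Int.induction_on with
  | zero => simp
  | succ n ih =>
      have h : 2 * ((n : ℤ) + 1) = (1 + 1) + 2 * n := by ring
      rw [h, hur_zpow_apply_add, ih, hur_sq]
      have h2 : ((x*y)^((n : ℤ) + 1)) = (x*y)^(n : ℤ) * (x*y) := zpow_add_one _ _
      rw [h2]
      generalize (x*y)^(n : ℤ) = u
      ext <;> (simp; group)
  | pred n ih =>
      have h : 2 * (-(n : ℤ) - 1) = (-1 + -1) + 2 * (-n) := by ring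
      rw [h, hur_zpow_apply_add, ih, hur_inv_sq]
      have h2 : ((x*y)^(-(n : ℤ) - 1)) = (x*y)^(-(n : ℤ)) * (x*y)⁻¹ := zpow_sub_one _ _
      rw [h2]
      generalize (x*y)^(-(n : ℤ)) = u
      ext <;> (simp; group)

lemma hur_two_mul_add_one {G : Type*} [Group G] (x y : G) (m : ℤ) :
    (hur ^ (2 * m + 1)) (x, y) =
      (((x*y)^m * x * ((x*y)^m)⁻¹) * ((x*y)^m * y * ((x*y)^m)⁻¹) * ((x*y)^m * x * ((x*y)^m)⁻¹)⁻¹,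
        (x*y)^m * x * ((x*y)^m)⁻¹) := by
  rw [add_comm, hur_zpow_apply_add, hur_two_mul, zpow_one, hur_apply]

lemma hur_mem_closure {G : Type*} [Group G] (x y : G) (n : ℤ) :
    ((hur ^ n) (x, y)).1 ∈ Subgroup.closure ({x, y} : Set G) ∧
    ((hur ^ n) (x, y)).2 ∈ Subgroup.closure ({x, y} : Set G) := by
  have hx : x ∈ Subgroup.closure ({x, y} : Set G) :=
    Subgroup.subset_closure (by simp)
  have hy : y ∈ Subgroup.closure ({x, y} : Set G) :=
    Subgroup.subset_closure (by simp)
  have hc : ∀ m : ℤ, (x*y)^m ∈ Subgroup.closure ({x, y} : Set G) :=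
    fun m => Subgroup.zpow_mem _ (Subgroup.mul_mem _ hx hy) m
  rcases Int.even_or_odd n with ⟨m, hm⟩ | ⟨m, hm⟩
  · have : n = 2 * m := by omega
    rw [this, hur_two_mul]
    exact ⟨by exact Subgroup.mul_mem _ (Subgroup.mul_mem _ (hc m) hx) (Subgroup.inv_mem _ (hc m)),
      by exact Subgroup.mul_mem _ (Subgroup.mul_mem _ (hc m) hy) (Subgroup.inv_mem _ (hc m))⟩
  · rw [hm, hur_two_mul_add_one]
    have h1 := Subgroup.mul_mem _ (Subgroup.mul_mem _ (hc m) hx) (Subgroup.inv_mem _ (hc m))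
    have h2 := Subgroup.mul_mem _ (Subgroup.mul_mem _ (hc m) hy) (Subgroup.inv_mem _ (hc m))
    exact ⟨Subgroup.mul_mem _ (Subgroup.mul_mem _ h1 h2) (Subgroup.inv_mem _ h1), h1⟩

noncomputable def permA : Equiv.Perm ℚ := Equiv.addLeft (1 : ℚ)
noncomputable def permB : Equiv.Perm ℚ := Equiv.mulLeft₀ (2 : ℚ) two_ne_zero

lemma permAB_apply (q : ℚ) : (permA * permB) q = 2 * q + 1 := by
  simp [permA, permB, Equiv.Perm.mul_apply, add_comm]

lemma permAB_zpow_apply (m : ℤ) : ∀ q : ℚ,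
    ((permA * permB) ^ m) q = 2 ^ m * q + (2 ^ m - 1) := by
  induction m using Int.induction_on with
  | zero => simp
  | succ n ih =>
      intro q
      have h1 : ((permA * permB) ^ ((n : ℤ) + 1)) q
          = ((permA * permB) ^ (n : ℤ)) ((permA * permB) q) := by
        rw [zpow_add, zpow_one, Equiv.Perm.mul_apply]
      rw [h1, permAB_apply, ih, zpow_add_one₀ (two_ne_zero)]
      ring
  | pred n ih =>
      intro q
      have hinv : (permA * permB)⁻¹ q = (q - 1) / 2 := by
        have h0 : (permA * permB) ((q - 1) / 2) = q := by rw [permAB_apply]; ring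
        nth_rewrite 1 [← h0]
        exact Equiv.symm_apply_apply _ _
      have h1 : ((permA * permB) ^ (-(n : ℤ) - 1)) q
          = ((permA * permB) ^ (-(n : ℤ))) ((permA * permB)⁻¹ q) := by
        rw [sub_eq_add_neg, zpow_add, zpow_neg_one, Equiv.Perm.mul_apply]
      rw [h1, hinv, ih, zpow_sub_one₀ (two_ne_zero)]
      field_simp
      ring

/-- If x, y generate a free group of rank 2 and f centralizes ⟨x, y⟩, then
simultaneous conjugation by f carrying σᵏ(x, y) to σʲ(x, y) forces k = j. -/
theorem hurwitz_orbit_free_pair_inj_up_to_conj {G : Type*} [Group G] (x y : G)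
    (hfree : Function.Injective
      (FreeGroup.lift (fun b : Bool => if b then x else y) : FreeGroup Bool →* G))
    (k j : ℤ) (f : G)
    (hcent : ∀ w ∈ Subgroup.closure ({x, y} : Set G), Commute f w)
    (h1 : f * ((hur ^ k) (x, y)).1 * f⁻¹ = ((hur ^ j) (x, y)).1)
    (h2 : f * ((hur ^ k) (x, y)).2 * f⁻¹ = ((hur ^ j) (x, y)).2) :
    k = j := by
  -- conjugation by f is trivial on the orbit
  have hconj : ∀ w ∈ Subgroup.closure ({x, y} : Set G), f * w * f⁻¹ = w := by
    intro w hw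
    rw [(hcent w hw).eq, mul_assoc, mul_inv_cancel, mul_one]
  have hk1 := hconj _ (hur_mem_closure x y k).1
  have hk2 := hconj _ (hur_mem_closure x y k).2
  rw [hk1] at h1
  rw [hk2] at h2
  have hkj : (hur ^ k) ((x, y) : G × G) = (hur ^ j) (x, y) := Prod.ext h1 h2
  have heq : (hur ^ (k - j)) ((x, y) : G × G) = (x, y) := by
    have h3 := congrArg (hur ^ (-j) : Equiv.Perm (G × G)) hkj
    rw [← hur_zpow_apply_add, ← hur_zpow_apply_add] at h3
    rw [show -j + k = k - j by ring] at h3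
    simpa using h3
  -- words in the free group
  set F : FreeGroup Bool →* G := FreeGroup.lift (fun b : Bool => if b then x else y)
  have hFa : F (FreeGroup.of true) = x := by simp [F]
  have hFb : F (FreeGroup.of false) = y := by simp [F]
  set a : FreeGroup Bool := FreeGroup.of true
  set b : FreeGroup Bool := FreeGroup.of false
  rcases Int.even_or_odd (k - j) with ⟨m, hm⟩ | ⟨m, hm⟩
  · -- even case
    have hm' : k - j = 2 * m := by omega
    rw [hm', hur_two_mul] at heq
    have hx : (x*y)^m * x * ((x*y)^m)⁻¹ = x := congrArg Prod.fst heq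
    -- transport to the free group
    have hword : (a*b)^m * a * ((a*b)^m)⁻¹ = a := by
      apply hfree
      simpa [map_mul, map_zpow, map_inv, hFa, hFb] using hx
    -- push into Perm ℚ
    set ψ : FreeGroup Bool →* Equiv.Perm ℚ :=
      FreeGroup.lift (fun t : Bool => if t then permA else permB)
    have hψ := congrArg ψ hword
    simp only [map_mul, map_zpow, map_inv] at hψ
    have hψa : ψ a = permA := by simp [ψ, a]
    have hψb : ψ b = permB := by simp [ψ, b]
    rw [hψa, hψb] at hψ
    have hcomm : (permA * permB) ^ m * permA = permA * (permA * permB) ^ m :=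
      mul_inv_eq_iff_eq_mul.mp hψ
    have h0 := congrArg (fun e : Equiv.Perm ℚ => e 0) hcomm
    simp only [Equiv.Perm.mul_apply] at h0
    have hA : ∀ q : ℚ, permA q = 1 + q := fun q => rfl
    rw [hA, hA, permAB_zpow_apply, permAB_zpow_apply] at h0
    have h2m : (2 : ℚ) ^ m = 1 := by linarith
    have hm0 : m = 0 := by
      have := zpow_right_injective₀ (a := (2:ℚ)) (by norm_num) (by norm_num)
      have := this (by simpa using h2m : (fun n : ℤ => (2:ℚ) ^ n) m = (fun n : ℤ => (2:ℚ) ^ n) 0)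
      exact this
    omega
  · -- odd case: impossible
    exfalso
    rw [hm, hur_two_mul_add_one] at heq
    have hx : (x*y)^m * x * ((x*y)^m)⁻¹ = y := congrArg Prod.snd heq
    have hword : (a*b)^m * a * ((a*b)^m)⁻¹ = b := by
      apply hfree
      simpa [map_mul, map_zpow, map_inv, hFa, hFb] using hx
    set χ : FreeGroup Bool →* Multiplicative ℤ :=
      FreeGroup.lift (fun t : Bool => if t then Multiplicative.ofAdd (1 : ℤ) else 1)
    have hχ := congrArg χ hword
    have hχa : χ a = Multiplicative.ofAdd (1 : ℤ) := by simp [χ, a]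
    have hχb : χ b = 1 := by simp [χ, b]
    simp only [map_mul, map_zpow, map_inv, hχa, hχb, mul_one] at hχ
    have h4 := mul_inv_eq_iff_eq_mul.mp hχ
    rw [one_mul] at h4
    have h5 : Multiplicative.ofAdd (1 : ℤ) = 1 := mul_eq_left.mp h4
    simp at h5
end
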